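/- Let F be a Hurwitz matrix, P∞ the symmetric positive semidefinite solution of F·P∞ + P∞·Fᵀ + Q = 0 with Q positive semidefinite, and for Δ > 0 define Φ = exp(F·Δ). Then the matrix Q_Δ = P∞ − Φ·P∞·Φᵀ is symmetric positive semidefinite. -/

import Mathlib

/-!
`M t = exp (t F) P∞ exp (t F)ᵀ` satisfies `M' t = exp (t F) (F P∞ + P∞ Fᵀ) exp (t F)ᵀ
= -exp (t F) Q exp (t F)ᵀ` by the Lyapunov equation, so `M` decreases in the Loewner order
and `P∞ - Φ P∞ Φᵀ = M 0 - M Δ` is positive semidefinite.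
-/

open Matrix NormedSpace

attribute [local instance] Matrix.linftyOpNormedAddCommGroup Matrix.linftyOpNormedSpace
  Matrix.linftyOpNormedRing Matrix.linftyOpNormedAlgebra

namespace Matrix

variable {n : Type*} [Fintype n]

theorem antitone_dotProduct_mulVec_of_hasDerivAt {M M' : ℝ → Matrix n n ℝ}
    (hM : ∀ t, HasDerivAt M (M' t) t) (hM' : ∀ t, (-M' t).PosSemidef) (x : n → ℝ) :
    Antitone fun t => x ⬝ᵥ M t *ᵥ x := by
  let L : Matrix n n ℝ →ₗ[ℝ] ℝ :=
    { toFun := fun A => x ⬝ᵥ A *ᵥ x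
      map_add' := fun A B => by simp only [add_mulVec, dotProduct_add]
      map_smul' := fun c A => by simp only [smul_mulVec, dotProduct_smul, RingHom.id_apply] }
  have hderiv : ∀ t, HasDerivAt (fun t => x ⬝ᵥ M t *ᵥ x) (x ⬝ᵥ M' t *ᵥ x) t := fun t =>
    L.toContinuousLinearMap.hasFDerivAt.comp_hasDerivAt t (hM t)
  refine antitone_of_deriv_nonpos (fun t => (hderiv t).differentiableAt) fun t => ?_
  have := (hM' t).dotProduct_mulVec_nonneg x
  rw [(hderiv t).deriv]
  simpa only [star_trivial, neg_mulVec, dotProduct_neg, neg_nonneg] using this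

variable [DecidableEq n]

theorem exp_smul_transpose (t : ℝ) (F : Matrix n n ℝ) :
    exp (t • Fᵀ) = (exp (t • F))ᵀ := by
  rw [← transpose_smul, exp_transpose]

theorem hasDerivAt_exp_smul_mul_mul_transpose (F P : Matrix n n ℝ) (t : ℝ) :
    HasDerivAt (fun t : ℝ => exp (t • F) * P * (exp (t • F))ᵀ)
      (exp (t • F) * (F * P + P * Fᵀ) * (exp (t • F))ᵀ) t := by
  have hexp : HasDerivAt (fun u : ℝ => exp (u • F) * P * exp (u • Fᵀ))
      (exp (t • F) * F * P * exp (t • Fᵀ) + exp (t • F) * P * (Fᵀ * exp (t • Fᵀ))) t :=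
    ((hasDerivAt_exp_smul_const F t).mul_const P).mul (hasDerivAt_exp_smul_const' Fᵀ t)
  simp only [exp_smul_transpose] at hexp
  convert hexp using 1
  noncomm_ring

end Matrix

theorem discrete_noise_posSemidef_general (n : ℕ) (F Q Pinf : Matrix (Fin n) (Fin n) ℝ)
    (hQ : Q.PosSemidef)
    (hPsymm : Pinf.IsSymm)
    (hLyap : F * Pinf + Pinf * Fᵀ + Q = 0)
    (Δ : ℝ) (hΔ : 0 < Δ) :
    (Pinf - NormedSpace.exp (Δ • F) * Pinf * (NormedSpace.exp (Δ • F))ᵀ).IsSymm ∧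
      (Pinf - NormedSpace.exp (Δ • F) * Pinf * (NormedSpace.exp (Δ • F))ᵀ).PosSemidef := by
  have hsymm : (Pinf - exp (Δ • F) * Pinf * (exp (Δ • F))ᵀ).IsSymm := by
    refine hPsymm.sub ?_
    simp only [IsSymm, transpose_mul, transpose_transpose, hPsymm.eq, Matrix.mul_assoc]
  have hdecay :
      ∀ t : ℝ, (-(exp (t • F) * (F * Pinf + Pinf * Fᵀ) * (exp (t • F))ᵀ)).PosSemidef := by
    intro t
    rw [eq_neg_of_add_eq_zero_left hLyap, Matrix.mul_neg, Matrix.neg_mul, neg_neg,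
      ← conjTranspose_eq_transpose_of_trivial]
    exact hQ.mul_mul_conjTranspose_same _
  refine ⟨hsymm, .of_dotProduct_mulVec_nonneg (isHermitian_iff_isSymm.2 hsymm) fun x => ?_⟩
  have hle := antitone_dotProduct_mulVec_of_hasDerivAt
    (hasDerivAt_exp_smul_mul_mul_transpose F Pinf) hdecay x hΔ.le
  simp only [zero_smul, exp_zero, Matrix.one_mul, transpose_one, Matrix.mul_one] at hle
  simpa only [star_trivial, sub_mulVec, dotProduct_sub, sub_nonneg] using hle

/-- Eq. (15): the discrete-time process noise covariance
`Q_Δ = P∞ - Φ * P∞ * Φᵀ` with `Φ = exp (Δ • F)` is symmetric positive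
semidefinite, where `P∞` is the symmetric PSD solution of the Lyapunov equation
`F * P∞ + P∞ * Fᵀ + Q = 0` for a Hurwitz `F` and PSD `Q`. -/
theorem discrete_noise_posSemidef (n : ℕ) (F Q Pinf : Matrix (Fin n) (Fin n) ℝ)
    (hF : ∀ μ ∈ spectrum ℂ (F.map (algebraMap ℝ ℂ)), μ.re < 0)
    (hQ : Q.PosSemidef)
    (hPsymm : Pinf.IsSymm) (hP : Pinf.PosSemidef)
    (hLyap : F * Pinf + Pinf * Fᵀ + Q = 0)
    (Δ : ℝ) (hΔ : 0 < Δ) :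
    (Pinf - NormedSpace.exp (Δ • F) * Pinf * (NormedSpace.exp (Δ • F))ᵀ).IsSymm ∧
      (Pinf - NormedSpace.exp (Δ • F) * Pinf * (NormedSpace.exp (Δ • F))ᵀ).PosSemidef :=
  discrete_noise_posSemidef_general n F Q Pinf hQ hPsymm hLyap Δ hΔ
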